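/- The set of steady states of the 2D semi-dissipative Boussinesq system contains an infinite-dimensional linear subspace of the phase space H × L². In particular, for every mean-free θ^H ∈ L²([0,L]) depending only on x₁, the pair ((0, ū₂), θ^H), where ū₂ is the unique mean-free periodic solution of ν ū₂'' = −g θ^H, is a steady state, and the map θ^H ↦ ((0,ū₂), θ^H) is linear and injective from L²([0,L]) into H × L². -/

import Mathlib

noncomputable section
open MeasureTheory Real Filter Topology
open scoped RealInnerProductSpace

/-- The 2D Euclidean plane (the torus is realized by `L`-periodic functions). -/
abbrev E2 := EuclideanSpace ℝ (Fin 2)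

/-- Standard basis vector. -/
def eb (i : Fin 2) : E2 := EuclideanSpace.single i 1

/-- Partial derivative of a scalar field. -/
def pd (f : E2 → ℝ) (i : Fin 2) (x : E2) : ℝ := fderiv ℝ f x (eb i)

/-- Gradient of a scalar field. -/
def grad (f : E2 → ℝ) (x : E2) : E2 := gradient f x

/-- Laplacian of a scalar field. -/
def lap (f : E2 → ℝ) (x : E2) : ℝ := ∑ i, pd (fun y => pd f i y) i x

/-- Divergence of a vector field. -/
def divg (u : E2 → E2) (x : E2) : ℝ := ∑ i, fderiv ℝ u x (eb i) i

/-- Componentwise Laplacian of a vector field. -/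
def vecLap (u : E2 → E2) (x : E2) : E2 :=
  ∑ j, EuclideanSpace.single j (lap (fun y => u y j) x)

/-- Fundamental domain `[0,L)²` of the torus. -/
def Q (L : ℝ) : Set E2 := {x | ∀ i, x i ∈ Set.Ico (0:ℝ) L}

/-- `L`-periodicity in each coordinate direction. -/
def Periodic2 {α : Type*} (L : ℝ) (f : E2 → α) : Prop := ∀ x i, f (x + L • eb i) = f x

/-- The upward gravity vector `(0, g)`. -/
def gvec (g : ℝ) : E2 := EuclideanSpace.single 1 g

/-- Classical form of the semi-dissipative 2D Boussinesq system on the time set `I`: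
momentum, transport and incompressibility equations. -/
def Boussinesq (ν g L : ℝ) (I : Set ℝ) (u : ℝ → E2 → E2) (θ p : ℝ → E2 → ℝ) : Prop :=
  ∀ t ∈ I, ∀ x : E2,
    deriv (fun s => u s x) t + fderiv ℝ (u t) x (u t x) + grad (p t) x
        = ν • vecLap (u t) x + θ t x • gvec g ∧
    deriv (fun s => θ s x) t + ⟪u t x, grad (θ t) x⟫ = 0 ∧
    divg (u t) x = 0 ∧
    Periodic2 L (u t) ∧ Periodic2 L (θ t) ∧ Periodic2 L (p t)

/-- Squared `L²` norm (on the fundamental domain) of a vector field. -/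
def l2V (L : ℝ) (u : E2 → E2) : ℝ := ∫ x in Q L, ‖u x‖^2

/-- Squared `L²` norm of a scalar field. -/
def l2S (L : ℝ) (f : E2 → ℝ) : ℝ := ∫ x in Q L, (f x)^2

/-- Squared (homogeneous) `H¹` norm of a vector field. -/
def h1V (L : ℝ) (u : E2 → E2) : ℝ := ∫ x in Q L, ∑ i, ‖grad (fun y => u y i) x‖^2

/-- Mean-free scalar field. -/
def MeanFreeS (L : ℝ) (f : E2 → ℝ) : Prop := (∫ x in Q L, f x) = 0

/-- Mean-free vector field. -/
def MeanFreeV (L : ℝ) (u : E2 → E2) : Prop := (∫ x in Q L, u x) = 0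

/-- The mean-free periodic profile `ū₂` associated to a horizontal temperature
profile `θH` by `ν ū₂'' = −g θH`. -/
def HSol (ν g L : ℝ) (θH ubar : ℝ → ℝ) : Prop :=
  ContDiff ℝ (⊤ : ℕ∞) ubar ∧ (∀ z, ubar (z + L) = ubar z) ∧
    (∫ z in (0:ℝ)..L, ubar z) = 0 ∧
    ∀ z, ν * deriv (deriv ubar) z = -(g * θH z)

-- appended after defs
lemma eb_app (i j : Fin 2) : eb i j = if j = i then 1 else 0 := by
  simp [eb, EuclideanSpace.single_apply]

lemma hasFDerivAt_c0 (f : ℝ → ℝ) (x : E2) (hf : DifferentiableAt ℝ f (x 0)) :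
    HasFDerivAt (fun y : E2 => f (y 0))
      (deriv f (x 0) • (EuclideanSpace.proj (0 : Fin 2) : E2 →L[ℝ] ℝ)) x := by
  have h : HasFDerivAt (fun y : E2 => y 0)
      (EuclideanSpace.proj (0 : Fin 2) : E2 →L[ℝ] ℝ) x :=
    (EuclideanSpace.proj (0 : Fin 2) : E2 →L[ℝ] ℝ).hasFDerivAt
  exact hf.hasDerivAt.comp_hasFDerivAt x h

lemma pd_c0 (f : ℝ → ℝ) (hf : Differentiable ℝ f) (i : Fin 2) (x : E2) :
    pd (fun y : E2 => f (y 0)) i x = deriv f (x 0) * eb i 0 := by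
  unfold pd
  rw [(hasFDerivAt_c0 f x (hf _)).fderiv]
  simp [smul_eq_mul]

lemma pd_const (c : ℝ) (i : Fin 2) (x : E2) : pd (fun _ : E2 => c) i x = 0 := by
  unfold pd
  simp

lemma lap_const (c : ℝ) (x : E2) : lap (fun _ : E2 => c) x = 0 := by
  unfold lap
  have h : ∀ i : Fin 2, (fun y : E2 => pd (fun _ : E2 => c) i y) = fun _ : E2 => (0:ℝ) :=
    fun i => funext fun y => pd_const c i y
  rw [Fin.sum_univ_two, show pd (fun y : E2 => pd (fun _ : E2 => c) 0 y) 0 x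
      = pd (fun _ : E2 => (0:ℝ)) 0 x from by rw [h 0],
    show pd (fun y : E2 => pd (fun _ : E2 => c) 1 y) 1 x
      = pd (fun _ : E2 => (0:ℝ)) 1 x from by rw [h 1], pd_const, pd_const]
  norm_num

lemma lap_c0 (f : ℝ → ℝ) (hf : Differentiable ℝ f) (hf' : Differentiable ℝ (deriv f)) (x : E2) :
    lap (fun y : E2 => f (y 0)) x = deriv (deriv f) (x 0) := by
  unfold lap
  rw [Fin.sum_univ_two]
  have h0 : (fun y : E2 => pd (fun y : E2 => f (y 0)) 0 y) = fun y : E2 => deriv f (y 0) := by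
    funext y; rw [pd_c0 f hf 0 y]; simp [eb_app]
  have h1 : (fun y : E2 => pd (fun y : E2 => f (y 0)) 1 y) = fun _ : E2 => (0:ℝ) := by
    funext y; rw [pd_c0 f hf 1 y]; simp [eb_app]
  rw [show pd (fun y : E2 => pd (fun y : E2 => f (y 0)) 0 y) 0 x
      = pd (fun y : E2 => deriv f (y 0)) 0 x from by rw [h0],
    show pd (fun y : E2 => pd (fun y : E2 => f (y 0)) 1 y) 1 x
      = pd (fun _ : E2 => (0:ℝ)) 1 x from by rw [h1],
    pd_c0 (deriv f) hf' 0 x, pd_const]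
  simp [eb_app]

lemma single_eq_smul (c : ℝ) : EuclideanSpace.single (1 : Fin 2) c = c • eb 1 := by
  ext j
  fin_cases j <;> simp [eb, EuclideanSpace.single_apply]

lemma hasFDerivAt_vec (f : ℝ → ℝ) (x : E2) (hf : DifferentiableAt ℝ f (x 0)) :
    HasFDerivAt (fun y : E2 => EuclideanSpace.single (1 : Fin 2) (f (y 0)))
      ((deriv f (x 0) • (EuclideanSpace.proj (0 : Fin 2) : E2 →L[ℝ] ℝ)).smulRight (eb 1)) x := by
  have h : (fun y : E2 => EuclideanSpace.single (1 : Fin 2) (f (y 0)))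
      = fun y : E2 => f (y 0) • eb 1 := by
    funext y; exact single_eq_smul _
  rw [h]
  exact (hasFDerivAt_c0 f x hf).smul_const (eb 1)

lemma grad_zero' (x : E2) : grad (fun _ : E2 => (0:ℝ)) x = 0 := by
  unfold grad gradient
  simp

lemma inner_grad (f : E2 → ℝ) (x v : E2) : ⟪grad f x, v⟫ = fderiv ℝ f x v := by
  unfold grad gradient
  exact InnerProductSpace.toDual_symm_apply

lemma steady_sol (ν g L : ℝ) (θH ubar : ℝ → ℝ) (hθ : ContDiff ℝ (⊤ : ℕ∞) θH)
    (hperθ : ∀ z, θH (z + L) = θH z) (hs : HSol ν g L θH ubar) :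
    Boussinesq ν g L Set.univ
      (fun _ x => EuclideanSpace.single 1 (ubar (x 0)))
      (fun _ x => θH (x 0)) (fun _ _ => 0) := by
  obtain ⟨hub, hper, hmean, hode⟩ := hs
  have hud : Differentiable ℝ ubar := hub.differentiable (by simp)
  have hud' : Differentiable ℝ (deriv ubar) :=
    (contDiff_infty_iff_deriv.mp (hub.of_le (by simp))).2.differentiable (by simp)
  have hθd : Differentiable ℝ θH := hθ.differentiable (by simp)
  intro t _ x
  refine ⟨?_, ?_, ?_, ?_, ?_, ?_⟩
  · -- momentum
    have h1 : deriv (fun _ : ℝ => EuclideanSpace.single (1:Fin 2) (ubar (x 0))) t = 0 :=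
      deriv_const _ _
    have h2 : fderiv ℝ (fun y : E2 => EuclideanSpace.single (1:Fin 2) (ubar (y 0))) x
        (EuclideanSpace.single (1:Fin 2) (ubar (x 0))) = 0 := by
      rw [(hasFDerivAt_vec ubar x (hud _)).fderiv]
      simp [EuclideanSpace.single_apply]
    have h3 : grad (fun _ : E2 => (0:ℝ)) x = 0 := grad_zero' x
    rw [h1, h2, h3]
    have hv : vecLap (fun y : E2 => EuclideanSpace.single (1:Fin 2) (ubar (y 0))) x
        = EuclideanSpace.single (1:Fin 2) (deriv (deriv ubar) (x 0)) := by
      unfold vecLap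
      rw [Fin.sum_univ_two]
      have e0 : (fun y : E2 => (EuclideanSpace.single (1:Fin 2) (ubar (y 0))) 0)
          = fun _ : E2 => (0:ℝ) := by
        funext y; simp [EuclideanSpace.single_apply]
      have e1 : (fun y : E2 => (EuclideanSpace.single (1:Fin 2) (ubar (y 0))) 1)
          = fun y : E2 => ubar (y 0) := by
        funext y; simp [EuclideanSpace.single_apply]
      rw [show lap (fun y : E2 => (EuclideanSpace.single (1:Fin 2) (ubar (y 0))) 0) x
          = lap (fun _ : E2 => (0:ℝ)) x from by rw [e0],
        show lap (fun y : E2 => (EuclideanSpace.single (1:Fin 2) (ubar (y 0))) 1) x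
          = lap (fun y : E2 => ubar (y 0)) x from by rw [e1],
        lap_const, lap_c0 ubar hud hud' x]
      ext j
      fin_cases j <;> simp [EuclideanSpace.single_apply]
    rw [hv]
    ext j
    fin_cases j <;>
      simp [EuclideanSpace.single_apply, gvec, PiLp.smul_apply, smul_eq_mul]
    · have := hode (x 0)
      linarith
  · -- transport
    have h1 : deriv (fun _ : ℝ => θH (x 0)) t = 0 := deriv_const _ _
    rw [h1, real_inner_comm, inner_grad,
      (hasFDerivAt_c0 θH x (hθd _)).fderiv]
    simp [EuclideanSpace.single_apply]
  · -- divergence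
    unfold divg
    rw [Fin.sum_univ_two, (hasFDerivAt_vec ubar x (hud _)).fderiv]
    simp [eb_app, EuclideanSpace.single_apply, PiLp.smul_apply, smul_eq_mul]
  · -- periodicity of u
    intro y i
    show EuclideanSpace.single (1:Fin 2) (ubar ((y + L • eb i) 0))
      = EuclideanSpace.single (1:Fin 2) (ubar (y 0))
    have hy : (y + L • eb i) 0 = y 0 + L * eb i 0 := by
      simp [PiLp.add_apply, PiLp.smul_apply, smul_eq_mul]
    rw [hy]
    fin_cases i
    · simp [eb_app, hper (y 0)]
    · simp [eb_app]
  · -- periodicity of θ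
    intro y i
    show θH ((y + L • eb i) 0) = θH (y 0)
    have hy : (y + L • eb i) 0 = y 0 + L * eb i 0 := by
      simp [PiLp.add_apply, PiLp.smul_apply, smul_eq_mul]
    rw [hy]
    fin_cases i
    · simp [eb_app, hperθ (y 0)]
    · simp [eb_app]
  · intro y i
    rfl

-- ODE part
lemma primitive_hasDerivAt (f : ℝ → ℝ) (hf : Continuous f) (z : ℝ) :
    HasDerivAt (fun w => ∫ t in (0:ℝ)..w, f t) (f z) z :=
  (hf.integral_hasStrictDerivAt 0 z).hasDerivAt

lemma primitive_contDiff (f : ℝ → ℝ) (hf : ContDiff ℝ (⊤ : ℕ∞) f) :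
    ContDiff ℝ (⊤ : ℕ∞) (fun w => ∫ t in (0:ℝ)..w, f t) := by
  rw [contDiff_infty_iff_deriv]
  refine ⟨fun z => (primitive_hasDerivAt f hf.continuous z).differentiableAt, ?_⟩
  have hd : deriv (fun w => ∫ t in (0:ℝ)..w, f t) = f :=
    funext fun z => (primitive_hasDerivAt f hf.continuous z).deriv
  rw [hd]
  exact hf

lemma primitive_periodic {L : ℝ} (f : ℝ → ℝ) (hf : Continuous f)
    (hper : ∀ z, f (z + L) = f z) (hmean : (∫ t in (0:ℝ)..L, f t) = 0) (z : ℝ) :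
    (∫ t in (0:ℝ)..(z + L), f t) = ∫ t in (0:ℝ)..z, f t := by
  have h1 : (∫ t in (0:ℝ)..z, f t) + (∫ t in z..(z + L), f t) = ∫ t in (0:ℝ)..(z + L), f t :=
    intervalIntegral.integral_add_adjacent_intervals (hf.intervalIntegrable _ _)
      (hf.intervalIntegrable _ _)
  have h2 : (∫ t in z..(z + L), f t) = ∫ t in (0:ℝ)..((0:ℝ) + L), f t :=
    (Function.Periodic.intervalIntegral_add_eq (fun x => hper x) z 0)
  rw [← h1, h2]
  simp [hmean]

/-- uniqueness of mean-free periodic solutions of `ν u'' = -(g θ)` -/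
lemma HSol_unique (ν g L : ℝ) (hν : 0 < ν) (hL : 0 < L) (θH u1 u2 : ℝ → ℝ)
    (h1 : HSol ν g L θH u1) (h2 : HSol ν g L θH u2) : u1 = u2 := by
  obtain ⟨hc1, hp1, hm1, he1⟩ := h1
  obtain ⟨hc2, hp2, hm2, he2⟩ := h2
  have hd1 : Differentiable ℝ u1 := hc1.differentiable (by simp)
  have hd2 : Differentiable ℝ u2 := hc2.differentiable (by simp)
  have hd1' : Differentiable ℝ (deriv u1) :=
    (contDiff_infty_iff_deriv.mp (hc1.of_le (by simp))).2.differentiable (by simp)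
  have hd2' : Differentiable ℝ (deriv u2) :=
    (contDiff_infty_iff_deriv.mp (hc2.of_le (by simp))).2.differentiable (by simp)
  set w : ℝ → ℝ := fun z => u1 z - u2 z with hw
  have hwd : Differentiable ℝ w := hd1.sub hd2
  have hwderiv : deriv w = fun z => deriv u1 z - deriv u2 z := by
    funext z; exact deriv_sub (hd1 z) (hd2 z)
  have hwd' : Differentiable ℝ (deriv w) := by
    rw [hwderiv]; exact hd1'.sub hd2'
  have hw2 : ∀ z, deriv (deriv w) z = 0 := by
    intro z
    rw [hwderiv, deriv_fun_sub (hd1' z) (hd2' z)]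
    have e1 := he1 z
    have e2 := he2 z
    have hmul : ν * (deriv (deriv u1) z - deriv (deriv u2) z) = 0 := by ring_nf; linarith
    have := (mul_eq_zero.mp hmul).resolve_left (ne_of_gt hν)
    linarith
  -- deriv w is constant
  have hconst : ∀ z, deriv w z = deriv w 0 :=
    fun z => is_const_of_deriv_eq_zero hwd' hw2 z 0
  -- w is affine
  set k : ℝ := deriv w 0 with hk
  have haff : ∀ z, w z = w 0 + k * z := by
    intro z
    have hlin : ∀ y, deriv (fun z => w z - k * z) y = 0 := by
      intro y
      rw [deriv_fun_sub (hwd y) (by fun_prop)]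
      rw [hconst y]
      have hdk : deriv (fun z : ℝ => k * z) y = k := by
        simpa using ((hasDerivAt_id y).const_mul k).deriv
      rw [hdk, sub_self]
    have := is_const_of_deriv_eq_zero
      (hwd.sub (by fun_prop : Differentiable ℝ (fun z : ℝ => k * z))) hlin z 0
    simp at this
    linarith [this]
  -- periodicity kills the slope
  have hkz : k = 0 := by
    have hp : w L = w 0 := by
      have := congrArg₂ (· - ·) (hp1 0) (hp2 0)
      simpa [hw, zero_add] using this
    have := haff L
    rw [hp] at this
    have : k * L = 0 := by linarith
    rcases mul_eq_zero.mp this with h | h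
    · exact h
    · exact absurd h (ne_of_gt hL)
  -- mean free kills the constant
  have hmean : (∫ z in (0:ℝ)..L, w z) = 0 := by
    have : (∫ z in (0:ℝ)..L, w z)
        = (∫ z in (0:ℝ)..L, u1 z) - ∫ z in (0:ℝ)..L, u2 z :=
      intervalIntegral.integral_sub (hc1.continuous.intervalIntegrable _ _)
        (hc2.continuous.intervalIntegrable _ _)
    rw [this, hm1, hm2, sub_zero]
  have hw0 : w 0 = 0 := by
    have hwc : ∀ z, w z = w 0 := by intro z; rw [haff z, hkz]; ring
    have : (∫ z in (0:ℝ)..L, w z) = L * w 0 := by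
      rw [intervalIntegral.integral_congr (g := fun _ => w 0) (fun z _ => hwc z)]
      simp [smul_eq_mul, hw]
      ring
    rw [hmean] at this
    rcases mul_eq_zero.mp this.symm with h | h
    · exact absurd h (ne_of_gt hL)
    · exact h
  funext z
  have := haff z
  rw [hkz, hw0] at this
  have h2 : u1 z - u2 z = 0 := by simpa [hw] using this
  linarith

lemma HSol_exists (ν g L : ℝ) (hν : 0 < ν) (hL : 0 < L) (θH : ℝ → ℝ)
    (hθ : ContDiff ℝ (⊤ : ℕ∞) θH) (hper : ∀ z, θH (z + L) = θH z)
    (hmean : (∫ z in (0:ℝ)..L, θH z) = 0) : ∃ u, HSol ν g L θH u := by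
  have hθc : Continuous θH := hθ.continuous
  have hν' : ν ≠ 0 := ne_of_gt hν
  have hL' : L ≠ 0 := ne_of_gt hL
  set F : ℝ → ℝ := fun z => ∫ t in (0:ℝ)..z, θH t with hF
  have hFd : ∀ z, HasDerivAt F (θH z) z := primitive_hasDerivAt θH hθc
  have hFs : ContDiff ℝ (⊤ : ℕ∞) F := primitive_contDiff θH hθ
  have hFc : Continuous F := hFs.continuous
  have hFper : ∀ z, F (z + L) = F z := primitive_periodic θH hθc hper hmean
  set c1 : ℝ := g / ν * (∫ t in (0:ℝ)..L, F t) / L with hc1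
  set v : ℝ → ℝ := fun z => c1 - g / ν * F z with hv
  have hvs : ContDiff ℝ (⊤ : ℕ∞) v := contDiff_const.sub (contDiff_const.mul hFs)
  have hvc : Continuous v := hvs.continuous
  have hvd : ∀ z, HasDerivAt v (-(g / ν * θH z)) z := by
    intro z
    exact ((hFd z).const_mul (g / ν)).const_sub c1
  have hvper : ∀ z, v (z + L) = v z := by
    intro z; simp [hv, hFper z]
  have hvmean : (∫ t in (0:ℝ)..L, v t) = 0 := by
    rw [hv]
    rw [intervalIntegral.integral_sub (intervalIntegrable_const)
      ((hFc.intervalIntegrable _ _).const_mul _)]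
    rw [intervalIntegral.integral_const, intervalIntegral.integral_const_mul]
    rw [hc1]
    simp only [smul_eq_mul, sub_zero]
    field_simp
    simp
  set G : ℝ → ℝ := fun z => ∫ t in (0:ℝ)..z, v t with hG
  have hGd : ∀ z, HasDerivAt G (v z) z := primitive_hasDerivAt v hvc
  have hGs : ContDiff ℝ (⊤ : ℕ∞) G := primitive_contDiff v hvs
  have hGc : Continuous G := hGs.continuous
  have hGper : ∀ z, G (z + L) = G z := primitive_periodic v hvc hvper hvmean
  set c0 : ℝ := -(∫ t in (0:ℝ)..L, G t) / L with hc0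
  refine ⟨fun z => c0 + G z, ?_, ?_, ?_, ?_⟩
  · exact contDiff_const.add hGs
  · intro z; show c0 + G (z + L) = c0 + G z; rw [hGper z]
  · rw [intervalIntegral.integral_add (intervalIntegrable_const)
      (hGc.intervalIntegrable _ _), intervalIntegral.integral_const]
    rw [hc0]
    simp only [smul_eq_mul, sub_zero]
    field_simp
    ring
  · intro z
    have hud : ∀ y, HasDerivAt (fun z => c0 + G z) (v y) y :=
      fun y => (hGd y).const_add c0
    have h1 : deriv (fun z => c0 + G z) = v := funext fun y => (hud y).deriv
    rw [h1, (hvd z).deriv]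
    field_simp

lemma HSol_lin (ν g L a b : ℝ) (θH θH' u u' : ℝ → ℝ)
    (h : HSol ν g L θH u) (h' : HSol ν g L θH' u') :
    HSol ν g L (fun z => a * θH z + b * θH' z) (fun z => a * u z + b * u' z) := by
  obtain ⟨hc, hp, hm, he⟩ := h
  obtain ⟨hc', hp', hm', he'⟩ := h'
  have hd : Differentiable ℝ u := hc.differentiable (by simp)
  have hd' : Differentiable ℝ u' := hc'.differentiable (by simp)
  have hdd : Differentiable ℝ (deriv u) :=
    (contDiff_infty_iff_deriv.mp (hc.of_le (by simp))).2.differentiable (by simp)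
  have hdd' : Differentiable ℝ (deriv u') :=
    (contDiff_infty_iff_deriv.mp (hc'.of_le (by simp))).2.differentiable (by simp)
  refine ⟨(contDiff_const.mul hc).add (contDiff_const.mul hc'), ?_, ?_, ?_⟩
  · intro z; simp [hp z, hp' z]
  · rw [intervalIntegral.integral_add ((hc.continuous.intervalIntegrable _ _).const_mul _)
      ((hc'.continuous.intervalIntegrable _ _).const_mul _),
      intervalIntegral.integral_const_mul, intervalIntegral.integral_const_mul, hm, hm']
    ring
  · intro z
    have h1 : deriv (fun z => a * u z + b * u' z) = fun z => a * deriv u z + b * deriv u' z := by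
      funext y
      rw [deriv_fun_add ((hd y).const_mul a) ((hd' y).const_mul b),
        deriv_const_mul a (hd y), deriv_const_mul b (hd' y)]
    rw [h1, deriv_fun_add ((hdd z).const_mul a) ((hdd' z).const_mul b),
      deriv_const_mul a (hdd z), deriv_const_mul b (hdd' z)]
    linear_combination a * he z + b * he' z


/-- **The steady states form an infinite-dimensional set.**
For every mean-free `θH ∈ L²([0,L])` depending only on `x₁` there is a unique
mean-free periodic `ū₂` with `ν ū₂'' = −g θH`, and `((0, ū₂), θH)` is a steady state
of the 2D semi-dissipative Boussinesq system (with zero pressure).  The assignment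
`θH ↦ ((0, ū₂), θH)` is linear and injective, so the set of steady states contains
an infinite-dimensional linear subspace of the phase space `H × L²`. -/
theorem steady_states_infinite_dimensional (ν g L : ℝ)
    (hν : 0 < ν) (hL : 0 < L) (hg : 0 < g) :
    -- existence and uniqueness of the profile `ū₂` :
    (∀ θH : ℝ → ℝ, ContDiff ℝ (⊤ : ℕ∞) θH → (∀ z, θH (z + L) = θH z) →
      (∫ z in (0:ℝ)..L, θH z) = 0 → ∃! ubar : ℝ → ℝ, HSol ν g L θH ubar) ∧
    -- `((0, ū₂), θH)` is a steady state :
    (∀ θH ubar : ℝ → ℝ, ContDiff ℝ (⊤ : ℕ∞) θH → (∀ z, θH (z + L) = θH z) →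
      (∫ z in (0:ℝ)..L, θH z) = 0 → HSol ν g L θH ubar →
      Boussinesq ν g L Set.univ
        (fun _ x => EuclideanSpace.single 1 (ubar (x 0)))
        (fun _ x => θH (x 0)) (fun _ _ => 0)) ∧
    -- linearity of the assignment `θH ↦ ū₂` :
    (∀ (a b : ℝ) (θH θH' ubar ubar' : ℝ → ℝ),
      HSol ν g L θH ubar → HSol ν g L θH' ubar' →
      HSol ν g L (fun z => a * θH z + b * θH' z) (fun z => a * ubar z + b * ubar' z)) ∧
    -- injectivity of `θH ↦ ((0, ū₂), θH)` (via the second component) :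
    (∀ θH θH' : ℝ → ℝ,
      (fun x : E2 => θH (x 0)) = (fun x : E2 => θH' (x 0)) → θH = θH') := by
  refine ⟨?_, ?_, ?_, ?_⟩
  · intro θH hθ hper hmean
    obtain ⟨u, hu⟩ := HSol_exists ν g L hν hL θH hθ hper hmean
    exact ⟨u, hu, fun u' hu' => HSol_unique ν g L hν hL θH u' u hu' hu⟩
  · intro θH ubar hθ hper _ hs
    exact steady_sol ν g L θH ubar hθ hper hs
  · intro a b θH θH' u u' h h'
    exact HSol_lin ν g L a b θH θH' u u' h h'
  · intro θH θH' h
    funext z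
    have := congrFun h (EuclideanSpace.single (0 : Fin 2) z)
    simpa [EuclideanSpace.single_apply] using this
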